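/- arXiv:1909.09125 — 2 statements merged into one kernel-verified Lean document; each statement's English description precedes it below -/
import Mathlib

section
/- Let u : ℝ³ → ℝ³ be a divergence-free Schwartz vector field with strain S = (∇u + (∇u)ᵀ)/2, vorticity ω = ∇×u, ω_h = (ω₁, ω₂, 0), and let S_h be the matrix with rows (0,0,S₁₃), (0,0,S₂₃), (−S₁₃,−S₂₃,0). Then for all −1 ≤ α ≤ 0 one has ‖S_h‖_{Ḣ^α} ≤ (1/√2)‖ω_h‖_{Ḣ^α}, where the Ḣ^α norm of S_h is taken entrywise (Frobenius norm). -/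
/-!
On the Fourier side, with `F = û`, every entry of `Ŝ_h` and of `ω̂_h` is `2πi` times a bilinear
expression in `ξ` and `F(ξ)`, and `∇ · u = 0` becomes `ξ · F(ξ) = 0`. Using the latter,
`|ω̂_h(ξ)|² - 2 |Ŝ_h(ξ)|² = 16 π² ξ₃² |F₃(ξ)|² ≥ 0` pointwise, and integrating against the weight
`(2π|ξ|)^{2α}` gives the claim. The right-hand integral is finite because `|ξ|^{2α}` is locally
integrable on `ℝ³` for `2α > -3` and `ω̂_h` is a Schwartz function.
-/

open MeasureTheory Real SchwartzMap
open scoped FourierTransform ENNReal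

noncomputable section

/-- Euclidean three-space. -/
abbrev E3 : Type := EuclideanSpace ℝ (Fin 3)

/-- The `i`-th standard basis vector. -/
def ee (i : Fin 3) : E3 := EuclideanSpace.single i 1

/-- The partial derivative `∂ᵢ f`. -/
def pd (i : Fin 3) (f : E3 → ℝ) : E3 → ℝ := fun x => fderiv ℝ f x (ee i)

/-- The Fourier transform (kernel `e^{-2πi x·ξ}`) of a real-valued function. -/
def ft (f : E3 → ℝ) : E3 → ℂ := 𝓕 (fun x => (f x : ℂ))

/-- The squared homogeneous Sobolev norm `‖v‖²_{Ḣ^s}` of a vector field,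
computed componentwise. -/
def hsV (s : ℝ) (v : Fin 3 → E3 → ℝ) : ℝ :=
  ∫ ξ : E3, (2 * π * ‖ξ‖) ^ (2 * s) * ∑ i, ‖ft (v i) ξ‖ ^ 2

/-- The squared homogeneous Sobolev norm `‖A‖²_{Ḣ^s}` of a matrix field,
computed entrywise (Frobenius norm). -/
def hsM (s : ℝ) (A : Fin 3 → Fin 3 → E3 → ℝ) : ℝ :=
  ∫ ξ : E3, (2 * π * ‖ξ‖) ^ (2 * s) * ∑ i, ∑ j, ‖ft (A i j) ξ‖ ^ 2

/-- The curl `ω = ∇ × u` of a vector field. -/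
def curl (u : Fin 3 → E3 → ℝ) : Fin 3 → E3 → ℝ :=
  ![fun x => pd 1 (u 2) x - pd 2 (u 1) x,
    fun x => pd 2 (u 0) x - pd 0 (u 2) x,
    fun x => pd 0 (u 1) x - pd 1 (u 0) x]

/-- The strain tensor `S = (∇u + (∇u)ᵀ)/2`. -/
def strain (u : Fin 3 → E3 → ℝ) : Fin 3 → Fin 3 → E3 → ℝ :=
  fun i j x => (pd i (u j) x + pd j (u i) x) / 2

section SchwartzWeight

variable {V F : Type*} [NormedAddCommGroup V] [NormedSpace ℝ V] [FiniteDimensional ℝ V]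
  [Nontrivial V] [MeasurableSpace V] [BorelSpace V] {μ : Measure V} [μ.IsAddHaarMeasure]
  [NormedAddCommGroup F] [NormedSpace ℝ F]

lemma SchwartzMap.integrable_rpow_norm_mul_norm_sq (g : 𝓢(V, F)) {s : ℝ}
    (hs : -(Module.finrank ℝ V : ℝ) < s) : Integrable (fun x => ‖x‖ ^ s * ‖g x‖ ^ 2) μ := by
  set M := SchwartzMap.seminorm ℝ 0 0 g
  have hM : ∀ x, ‖g x‖ ≤ M := g.norm_le_seminorm ℝ
  have hmeas : AEStronglyMeasurable (fun x => ‖x‖ ^ s * ‖g x‖ ^ 2) μ :=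
    ((measurable_norm.pow_const s).mul (g.continuous.norm.pow 2).measurable).aestronglyMeasurable
  have hball : IntegrableOn (fun x => ‖x‖ ^ s * ‖g x‖ ^ 2) (Metric.ball 0 1) μ := by
    refine integrableOn_ball_of_norm_le_rpow Module.finrank_pos (C := M ^ 2) (α := -s)
      (by linarith) (ae_of_all _ fun x => ?_) hmeas
    rw [neg_neg, norm_mul, norm_pow, norm_norm, Real.norm_of_nonneg (by positivity), mul_comm]
    gcongr
    exact hM x
  have hcompl : IntegrableOn (fun x => ‖x‖ ^ s * ‖g x‖ ^ 2) (Metric.ball 0 1)ᶜ μ := by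
    refine ((g.integrable_pow_mul μ ⌈s⌉₊).const_mul M).integrableOn.mono' hmeas.restrict ?_
    rw [ae_restrict_iff' measurableSet_ball.compl]
    refine ae_of_all _ fun x hx => ?_
    have hx1 : 1 ≤ ‖x‖ := by simpa using hx
    rw [norm_mul, norm_pow, norm_norm, Real.norm_of_nonneg (by positivity)]
    calc ‖x‖ ^ s * ‖g x‖ ^ 2 ≤ ‖x‖ ^ (⌈s⌉₊ : ℝ) * (M * ‖g x‖) := by
          rw [sq]
          gcongr
          · exact Nat.le_ceil s
          · exact hM x
      _ = M * (‖x‖ ^ ⌈s⌉₊ * ‖g x‖) := by rw [Real.rpow_natCast]; ring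
  simpa using hball.union hcompl

end SchwartzWeight

lemma ft_add {f g : E3 → ℝ} (hf : Integrable f) (hg : Integrable g) (ξ : E3) :
    ft (fun x => f x + g x) ξ = ft f ξ + ft g ξ := by
  simp only [ft, Real.fourier_eq, Complex.ofReal_add, smul_add]
  exact integral_add ((Real.fourierIntegral_convergent_iff ξ).2 hf.ofReal)
    ((Real.fourierIntegral_convergent_iff ξ).2 hg.ofReal)

lemma ft_sub {f g : E3 → ℝ} (hf : Integrable f) (hg : Integrable g) (ξ : E3) :
    ft (fun x => f x - g x) ξ = ft f ξ - ft g ξ := by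
  simp only [ft, Real.fourier_eq, Complex.ofReal_sub, smul_sub]
  exact integral_sub ((Real.fourierIntegral_convergent_iff ξ).2 hf.ofReal)
    ((Real.fourierIntegral_convergent_iff ξ).2 hg.ofReal)

lemma ft_sum {ι : Type*} (s : Finset ι) {f : ι → E3 → ℝ} (hf : ∀ i ∈ s, Integrable (f i))
    (ξ : E3) : ft (fun x => ∑ i ∈ s, f i x) ξ = ∑ i ∈ s, ft (f i) ξ := by
  simp only [ft, Real.fourier_eq, Complex.ofReal_sum, Finset.smul_sum]
  exact integral_finsetSum s fun i hi =>
    (Real.fourierIntegral_convergent_iff ξ).2 (hf i hi).ofReal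

lemma ft_const_mul (c : ℝ) (f : E3 → ℝ) (ξ : E3) :
    ft (fun x => c * f x) ξ = c * ft f ξ := by
  simp only [ft, Real.fourier_eq, Complex.ofReal_mul, ← integral_const_mul, mul_smul_comm]

lemma ft_neg (f : E3 → ℝ) (ξ : E3) : ft (fun x => -f x) ξ = -ft f ξ := by
  simpa using ft_const_mul (-1) f ξ

lemma ft_zero (ξ : E3) : ft (fun _ => 0) ξ = 0 := by
  simp [ft, Real.fourier_eq]

lemma pd_eq_lineDerivOp (f : 𝓢(E3, ℝ)) (i : Fin 3) :
    pd i f = ⇑(LineDeriv.lineDerivOp (ee i) f) := by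
  ext x
  simp [pd, SchwartzMap.lineDerivOp_apply_eq_fderiv]

lemma integrable_pd (f : 𝓢(E3, ℝ)) (i : Fin 3) : Integrable (pd i f) := by
  rw [pd_eq_lineDerivOp]
  exact SchwartzMap.integrable _

open Complex in
lemma ft_pd (f : 𝓢(E3, ℝ)) (j : Fin 3) (ξ : E3) :
    ft (pd j f) ξ = 2 * π * I * ξ j * ft f ξ := by
  set g : 𝓢(E3, ℂ) := f.postcompCLM ofRealCLM
  have hg : (fun x => (pd j f x : ℂ)) = ⇑(LineDeriv.lineDerivOp (ee j) g) := by
    ext x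
    have : HasFDerivAt (⇑g) (ofRealCLM.comp (fderiv ℝ f x)) x :=
      ofRealCLM.hasFDerivAt.comp x f.differentiableAt.hasFDerivAt
    simp [g, pd, SchwartzMap.lineDerivOp_apply_eq_fderiv, this.fderiv]
  have hinner : (fun x : E3 => inner ℝ x (ee j)).HasTemperateGrowth :=
    ((innerSL ℝ).flip (ee j)).hasTemperateGrowth
  have := congrArg (· ξ) (SchwartzMap.fourier_lineDerivOp_eq g (ee j))
  simp only [SchwartzMap.fourier_coe, smul_apply, smulLeftCLM_apply_apply hinner] at this
  rw [ft, hg, this, ft]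
  simp only [ee, EuclideanSpace.inner_single_right, smul_eq_mul, conj_trivial, one_mul,
    Complex.real_smul]
  ring_nf
  rfl

lemma integrable_weight_mul_norm_sq_ft (W : 𝓢(E3, ℝ)) {s : ℝ} (hs : -3 < s) :
    Integrable (fun ξ : E3 => (2 * π * ‖ξ‖) ^ s * ‖ft W ξ‖ ^ 2) := by
  have h := (𝓕 (W.postcompCLM Complex.ofRealCLM)).integrable_rpow_norm_mul_norm_sq
    (μ := volume) (s := s) (by simpa [finrank_euclideanSpace] using hs)
  refine (h.const_mul ((2 * π) ^ s)).congr (ae_of_all _ fun ξ => ?_)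
  dsimp only
  rw [Real.mul_rpow (by positivity) (norm_nonneg ξ), mul_assoc]
  rfl

lemma norm_sq_add_norm_sq_le_of_dot_eq_zero (p q r : ℝ) (A B C : ℂ)
    (h : (p : ℂ) * A + q * B + r * C = 0) :
    ‖(p : ℂ) * C + r * A‖ ^ 2 + ‖(q : ℂ) * C + r * B‖ ^ 2
      ≤ ‖(q : ℂ) * C - r * B‖ ^ 2 + ‖(r : ℂ) * A - p * C‖ ^ 2 := by
  have h_re : p * A.re + q * B.re + r * C.re = 0 := by simpa using congrArg Complex.re h
  have h_im : p * A.im + q * B.im + r * C.im = 0 := by simpa using congrArg Complex.im h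
  have hdiff : (‖(q : ℂ) * C - r * B‖ ^ 2 + ‖(r : ℂ) * A - p * C‖ ^ 2)
      - (‖(p : ℂ) * C + r * A‖ ^ 2 + ‖(q : ℂ) * C + r * B‖ ^ 2) = 4 * r ^ 2 * ‖C‖ ^ 2 := by
    simp only [Complex.sq_norm, Complex.normSq_apply, Complex.add_re, Complex.add_im,
      Complex.sub_re, Complex.sub_im, Complex.mul_re, Complex.mul_im, Complex.ofReal_re,
      Complex.ofReal_im]
    linear_combination (-4 * r * C.re) * h_re + (-4 * r * C.im) * h_im
  linarith [show 0 ≤ 4 * r ^ 2 * ‖C‖ ^ 2 by positivity]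

def horizontalStrain (S : Fin 3 → Fin 3 → E3 → ℝ) : Fin 3 → Fin 3 → E3 → ℝ :=
  ![![fun _ => 0, fun _ => 0, S 0 2],
    ![fun _ => 0, fun _ => 0, S 1 2],
    ![fun x => -S 0 2 x, fun x => -S 1 2 x, fun _ => 0]]

def horizontalPart (ω : Fin 3 → E3 → ℝ) : Fin 3 → E3 → ℝ := ![ω 0, ω 1, fun _ => 0]

section VectorField

variable (u : Fin 3 → 𝓢(E3, ℝ))

open Complex in
lemma ft_strain (i j : Fin 3) (ξ : E3) :
    ft (strain (fun k => ⇑(u k)) i j) ξ = π * I * (ξ i * ft (u j) ξ + ξ j * ft (u i) ξ) := by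
  rw [show strain (fun k => ⇑(u k)) i j = fun x => 2⁻¹ * (pd i (u j) x + pd j (u i) x) from
      funext fun x => div_eq_inv_mul _ _,
    ft_const_mul, ft_add (integrable_pd _ _) (integrable_pd _ _), ft_pd, ft_pd]
  push_cast
  ring

open Complex in
lemma ft_curl_zero (ξ : E3) :
    ft (curl (fun k => ⇑(u k)) 0) ξ = 2 * π * I * (ξ 1 * ft (u 2) ξ - ξ 2 * ft (u 1) ξ) := by
  rw [show curl (fun k => ⇑(u k)) 0 = fun x => pd 1 (u 2) x - pd 2 (u 1) x from rfl,
    ft_sub (integrable_pd _ _) (integrable_pd _ _), ft_pd, ft_pd]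
  ring

open Complex in
lemma ft_curl_one (ξ : E3) :
    ft (curl (fun k => ⇑(u k)) 1) ξ = 2 * π * I * (ξ 2 * ft (u 0) ξ - ξ 0 * ft (u 2) ξ) := by
  rw [show curl (fun k => ⇑(u k)) 1 = fun x => pd 2 (u 0) x - pd 0 (u 2) x from rfl,
    ft_sub (integrable_pd _ _) (integrable_pd _ _), ft_pd, ft_pd]
  ring

lemma sum_mul_ft_eq_zero_of_div_free (hdiv : ∀ x : E3, ∑ i, pd i (⇑(u i)) x = 0) (ξ : E3) :
    ∑ i, (ξ i : ℂ) * ft (u i) ξ = 0 := by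
  have h := ft_sum Finset.univ (fun i _ => integrable_pd (u i) i) ξ
  simp only [hdiv, ft_zero, ft_pd] at h
  have h2πI : 2 * (π : ℂ) * Complex.I ≠ 0 := by simp [Real.pi_ne_zero]
  refine (mul_eq_zero.mp ?_).resolve_left h2πI
  rw [Finset.mul_sum, h]
  exact Finset.sum_congr rfl fun i _ => by ring

lemma sum_norm_sq_ft_horizontalStrain_le
    (hdiv : ∀ x : E3, ∑ i, pd i (⇑(u i)) x = 0) (ξ : E3) :
    ∑ i, ∑ j, ‖ft (horizontalStrain (strain fun k => ⇑(u k)) i j) ξ‖ ^ 2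
      ≤ 2⁻¹ * ∑ i, ‖ft (horizontalPart (curl fun k => ⇑(u k)) i) ξ‖ ^ 2 := by
  have hdot := sum_mul_ft_eq_zero_of_div_free u hdiv ξ
  rw [Fin.sum_univ_three] at hdot
  have key := norm_sq_add_norm_sq_le_of_dot_eq_zero _ _ _ _ _ _ hdot
  simp only [Fin.sum_univ_three, horizontalStrain, horizontalPart, Matrix.cons_val_zero,
    Matrix.cons_val_one, Matrix.cons_val_two, Matrix.head_cons, Matrix.tail_cons, ft_zero, ft_neg,
    norm_neg, norm_zero, ft_strain, ft_curl_zero, ft_curl_one, norm_mul,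
    Complex.norm_I, Complex.norm_real, Complex.norm_ofNat, Real.norm_of_nonneg pi_pos.le]
  nlinarith [mul_le_mul_of_nonneg_left key (sq_nonneg π)]

lemma exists_schwartz_eq_horizontalPart_curl (i : Fin 3) :
    ∃ W : 𝓢(E3, ℝ), horizontalPart (curl fun k => ⇑(u k)) i = ⇑W := by
  open LineDeriv in
  fin_cases i
  · exact ⟨∂_{ee 1} (u 2) - ∂_{ee 2} (u 1),
      by ext x; simp [horizontalPart, curl, pd_eq_lineDerivOp]⟩
  · exact ⟨∂_{ee 2} (u 0) - ∂_{ee 0} (u 2),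
      by ext x; simp [horizontalPart, curl, pd_eq_lineDerivOp]⟩
  · exact ⟨0, rfl⟩

lemma integrable_weight_mul_sum_norm_sq_ft_horizontalPart_curl {s : ℝ} (hs : -3 < s) :
    Integrable (fun ξ : E3 =>
      (2 * π * ‖ξ‖) ^ s * ∑ i, ‖ft (horizontalPart (curl fun k => ⇑(u k)) i) ξ‖ ^ 2) := by
  simp only [Finset.mul_sum]
  refine integrable_finsetSum _ fun i _ => ?_
  obtain ⟨W, hW⟩ := exists_schwartz_eq_horizontalPart_curl u i
  rw [hW]
  exact integrable_weight_mul_norm_sq_ft W hs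

end VectorField

lemma sqrt_hsM_le_mul_sqrt_hsV {s c : ℝ} {A : Fin 3 → Fin 3 → E3 → ℝ} {v : Fin 3 → E3 → ℝ}
    (hc : 0 ≤ c)
    (hv : Integrable (fun ξ : E3 => (2 * π * ‖ξ‖) ^ (2 * s) * ∑ i, ‖ft (v i) ξ‖ ^ 2))
    (hAv : ∀ ξ, ∑ i, ∑ j, ‖ft (A i j) ξ‖ ^ 2 ≤ c ^ 2 * ∑ i, ‖ft (v i) ξ‖ ^ 2) :
    √(hsM s A) ≤ c * √(hsV s v) := by
  have hle : hsM s A ≤ c ^ 2 * hsV s v := by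
    rw [hsV, ← integral_const_mul]
    refine integral_mono_of_nonneg (ae_of_all _ fun ξ => by positivity) (hv.const_mul _)
      (ae_of_all _ fun ξ => ?_)
    calc (2 * π * ‖ξ‖) ^ (2 * s) * ∑ i, ∑ j, ‖ft (A i j) ξ‖ ^ 2
        ≤ (2 * π * ‖ξ‖) ^ (2 * s) * (c ^ 2 * ∑ i, ‖ft (v i) ξ‖ ^ 2) := by gcongr; exact hAv ξ
      _ = c ^ 2 * ((2 * π * ‖ξ‖) ^ (2 * s) * ∑ i, ‖ft (v i) ξ‖ ^ 2) := by ring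
  calc √(hsM s A) ≤ √(c ^ 2 * hsV s v) := Real.sqrt_le_sqrt hle
    _ = c * √(hsV s v) := by rw [Real.sqrt_mul (sq_nonneg c), Real.sqrt_sq hc]

theorem statement2_general (u : Fin 3 → 𝓢(E3, ℝ))
    (hdiv : ∀ x : E3, ∑ i, pd i (⇑(u i)) x = 0)
    (α : ℝ) (hα₁ : -1 ≤ α)
    (S : Fin 3 → Fin 3 → E3 → ℝ) (hS : S = strain (fun i => ⇑(u i)))
    (ω : Fin 3 → E3 → ℝ) (hω : ω = curl (fun i => ⇑(u i)))
    (ωh : Fin 3 → E3 → ℝ) (hωh : ωh = ![ω 0, ω 1, fun _ => 0])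
    (Sh : Fin 3 → Fin 3 → E3 → ℝ)
    (hSh : Sh = ![![fun _ => 0, fun _ => 0, S 0 2],
                  ![fun _ => 0, fun _ => 0, S 1 2],
                  ![fun x => -S 0 2 x, fun x => -S 1 2 x, fun _ => 0]]) :
    Real.sqrt (hsM α Sh) ≤ (1 / Real.sqrt 2) * Real.sqrt (hsV α ωh) := by
  obtain rfl : Sh = horizontalStrain S := hSh
  obtain rfl : ωh = horizontalPart ω := hωh
  subst hS hω
  refine sqrt_hsM_le_mul_sqrt_hsV (by positivity)
    (integrable_weight_mul_sum_norm_sq_ft_horizontalPart_curl u (by linarith)) fun ξ => ?_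
  rw [div_pow, one_pow, Real.sq_sqrt zero_le_two, one_div]
  exact sum_norm_sq_ft_horizontalStrain_le u hdiv ξ

/-- For a divergence-free Schwartz vector field `u` with strain `S`, vorticity `ω`,
`ω_h = (ω₁, ω₂, 0)`, and `S_h` the matrix with rows `(0,0,S₁₃), (0,0,S₂₃), (−S₁₃,−S₂₃,0)`:
for all `−1 ≤ α ≤ 0`, `‖S_h‖_{Ḣ^α} ≤ (1/√2)‖ω_h‖_{Ḣ^α}`. -/
theorem statement2 (u : Fin 3 → 𝓢(E3, ℝ))
    (hdiv : ∀ x : E3, ∑ i, pd i (⇑(u i)) x = 0)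
    (α : ℝ) (hα₁ : -1 ≤ α) (hα₂ : α ≤ 0)
    (S : Fin 3 → Fin 3 → E3 → ℝ) (hS : S = strain (fun i => ⇑(u i)))
    (ω : Fin 3 → E3 → ℝ) (hω : ω = curl (fun i => ⇑(u i)))
    (ωh : Fin 3 → E3 → ℝ) (hωh : ωh = ![ω 0, ω 1, fun _ => 0])
    (Sh : Fin 3 → Fin 3 → E3 → ℝ)
    (hSh : Sh = ![![fun _ => 0, fun _ => 0, S 0 2],
                  ![fun _ => 0, fun _ => 0, S 1 2],
                  ![fun x => -S 0 2 x, fun x => -S 1 2 x, fun _ => 0]]) :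
    Real.sqrt (hsM α Sh) ≤ (1 / Real.sqrt 2) * Real.sqrt (hsV α ωh) :=
  statement2_general u hdiv α hα₁ S hS ω hω ωh hωh Sh hSh
end
end

section
/- Let A be a real 3×3 symmetric matrix with trace zero. Then −4 det(A) ≤ (2√6/9) |A|³, where |A| = (Σ_{i,j} A_{ij}²)^{1/2} is the Frobenius norm. -/
/-!
Diagonalise `A`: its eigenvalues `x, y, z` satisfy `x + y + z = tr A = 0`, `xyz = det A` and
`x² + y² + z² = |A|²`. With `z = -(x + y)` the inequality becomes
`54 (xyz)² ≤ (x² + y² + z²)³`, and the difference of the two sides is the perfect square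
`2 ((x - y)(x + 2y)(2x + y))²`.
-/

open Matrix

lemma sq_mul_mul_le_of_add_eq_zero {x y z : ℝ} (h : x + y + z = 0) :
    54 * (x * y * z) ^ 2 ≤ (x ^ 2 + y ^ 2 + z ^ 2) ^ 3 := by
  obtain rfl : z = -(x + y) := by linarith
  nlinarith [sq_nonneg ((x - y) * (x + 2 * y) * (2 * x + y))]

lemma four_mul_abs_mul_mul_le_of_add_eq_zero {x y z : ℝ} (h : x + y + z = 0) :
    4 * |x * y * z| ≤ 2 * √6 / 9 * √(x ^ 2 + y ^ 2 + z ^ 2) ^ 3 := by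
  rw [← abs_of_nonneg (by norm_num : (0 : ℝ) ≤ 4), ← abs_mul]
  refine abs_le_of_sq_le_sq ?_ (by positivity)
  have hS : √(x ^ 2 + y ^ 2 + z ^ 2) ^ 2 = x ^ 2 + y ^ 2 + z ^ 2 := Real.sq_sqrt (by positivity)
  calc (4 * (x * y * z)) ^ 2 ≤ 24 / 81 * (x ^ 2 + y ^ 2 + z ^ 2) ^ 3 := by
        linarith [sq_mul_mul_le_of_add_eq_zero h]
    _ = (2 * √6 / 9 * √(x ^ 2 + y ^ 2 + z ^ 2) ^ 3) ^ 2 := by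
        rw [mul_pow, ← pow_mul, mul_comm 3 2, pow_mul, hS, div_pow, mul_pow,
          Real.sq_sqrt (by norm_num)]
        norm_num

lemma Matrix.IsHermitian.trace_mul_self_eq_sum_eigenvalues_sq {n 𝕜 : Type*} [Fintype n]
    [DecidableEq n] [RCLike 𝕜] {A : Matrix n n 𝕜} (hA : A.IsHermitian) :
    (A * A).trace = ∑ i, ((hA.eigenvalues i ^ 2 : ℝ) : 𝕜) := by
  conv_lhs => rw [hA.spectral_theorem, ← map_mul, Unitary.conjStarAlgAut_apply, trace_mul_cycle,
    Unitary.coe_star_mul_self, one_mul, diagonal_mul_diagonal, trace_diagonal]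
  simp [sq]

lemma Matrix.sum_sq_eq_trace_mul_transpose {m n R : Type*} [Fintype m] [Fintype n] [Semiring R]
    (A : Matrix m n R) : ∑ i, ∑ j, A i j ^ 2 = (A * Aᵀ).trace := by
  simp [trace, mul_apply, sq]

/-- For a real symmetric trace-free 3×3 matrix `A`,
`−4 det(A) ≤ (2√6/9)|A|³` where `|A|` is the Frobenius norm. -/
theorem statement4 (A : Matrix (Fin 3) (Fin 3) ℝ)
    (hsym : A.IsSymm) (htr : A.trace = 0) :
    -4 * A.det ≤ (2 * Real.sqrt 6 / 9) * (Real.sqrt (∑ i, ∑ j, A i j ^ 2)) ^ 3 := by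
  have hA : A.IsHermitian := isHermitian_iff_isSymm.mpr hsym
  have hsum : hA.eigenvalues 0 + hA.eigenvalues 1 + hA.eigenvalues 2 = 0 := by
    simpa [Fin.sum_univ_three, htr] using hA.trace_eq_sum_eigenvalues.symm
  have hdet : A.det = hA.eigenvalues 0 * hA.eigenvalues 1 * hA.eigenvalues 2 := by
    simpa [Fin.prod_univ_three, mul_assoc] using hA.det_eq_prod_eigenvalues
  have hfrob : ∑ i, ∑ j, A i j ^ 2 =
      hA.eigenvalues 0 ^ 2 + hA.eigenvalues 1 ^ 2 + hA.eigenvalues 2 ^ 2 := by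
    rw [sum_sq_eq_trace_mul_transpose, hsym.eq]
    simpa [Fin.sum_univ_three] using hA.trace_mul_self_eq_sum_eigenvalues_sq
  rw [hdet, hfrob]
  linarith [neg_abs_le (hA.eigenvalues 0 * hA.eigenvalues 1 * hA.eigenvalues 2),
    four_mul_abs_mul_mul_le_of_add_eq_zero hsum]
end
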